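/- For any integer n ≥ 2, the sum over k from 0 to n-1 of ((-n)_k (n-1)_k) / ((1)_k (1/2)_k) equals (-1)^(n-1) (2^(2n-2) - (2^(2n-2) - 1)/(2n-1)). -/

import Mathlib

/-!
Summing up to `k = n` instead gives the terminating Gauss series `₂F₁(-n, n - 1; 1/2; 1)`, which
Chu–Vandermonde evaluates to `(3/2 - n)_n / (1/2)_n = (-1)^(n-1) / (2n - 1)` by the reflection
`(1 - a - n)_n = (-1)^n (a)_n`. The extra term `k = n` is `(-1)^n (n-1)_n / (1/2)_n`, which the
duplication formula `4^n (a)_n (a + 1/2)_n = (2a)_{2n}` at `a = 1/2` turns into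
`(-1)^n 2 · 4^(n-1) (n-1) / (2n - 1)`. Chu–Vandermonde itself follows by induction on `n` from
Zeilberger's recurrence `(c + n) F(n + 1) = (c - b + n) F(n)` for `F(n) = ∑ₖ t(n, k)`, which
telescopes with the certificate `(b + k) t(n, k)`.
-/

open Finset

/-- The Pochhammer symbol (rising factorial): (a)_0 = 1, (a)_k = a(a+1)⋯(a+k-1). -/
def poch (a : ℚ) : ℕ → ℚ
  | 0 => 1
  | k + 1 => poch a k * (a + k)

theorem poch_zero (a : ℚ) : poch a 0 = 1 := rfl

theorem poch_succ_right (a : ℚ) (k : ℕ) : poch a (k + 1) = poch a k * (a + k) := rfl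

theorem poch_succ_left (a : ℚ) (k : ℕ) : poch a (k + 1) = a * poch (a + 1) k := by
  induction k with
  | zero => simp [poch]
  | succ k ih => rw [poch_succ_right, ih, poch_succ_right, Nat.cast_succ]; ring

theorem poch_add (a : ℚ) (j k : ℕ) : poch a (j + k) = poch a j * poch (a + j) k := by
  induction k with
  | zero => simp [poch]
  | succ k ih => rw [← add_assoc, poch_succ_right, ih, poch_succ_right, Nat.cast_add]; ring

theorem poch_ne_zero_of_le {a : ℚ} {j k : ℕ} (hjk : j ≤ k) (hk : poch a k ≠ 0) :
    poch a j ≠ 0 := by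
  obtain ⟨d, rfl⟩ := Nat.exists_eq_add_of_le hjk
  rw [poch_add] at hk
  exact left_ne_zero_of_mul hk

theorem poch_pos {a : ℚ} (ha : 0 < a) (k : ℕ) : 0 < poch a k := by
  induction k with
  | zero => exact one_pos
  | succ k ih => rw [poch_succ_right]; positivity

theorem poch_neg_natCast_succ (n : ℕ) : poch (-n) (n + 1) = 0 := by
  simp [poch_succ_right]

theorem poch_one_sub_sub (a : ℚ) (n : ℕ) : poch (1 - a - n) n = (-1) ^ n * poch a n := by
  induction n with
  | zero => simp [poch]
  | succ n ih =>
    rw [poch_succ_left, show 1 - a - ((n + 1 : ℕ) : ℚ) + 1 = 1 - a - n by push_cast; ring, ih,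
      poch_succ_right]
    push_cast
    ring

theorem pow_mul_poch_mul_poch_add_half (a : ℚ) (n : ℕ) :
    4 ^ n * poch a n * poch (a + 1 / 2) n = poch (2 * a) (2 * n) := by
  induction n with
  | zero => simp [poch]
  | succ n ih =>
    rw [show 2 * (n + 1) = 2 * n + 1 + 1 by ring, poch_succ_right, poch_succ_right,
      poch_succ_right, poch_succ_right, ← ih]
    push_cast
    ring

/-- The `k`-th term of the terminating hypergeometric series `₂F₁(-n, b; c; 1)`. -/
def chuTerm (n : ℕ) (b c : ℚ) (k : ℕ) : ℚ :=
  poch (-n) k * poch b k / (poch 1 k * poch c k)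

theorem chuTerm_zero (n : ℕ) (b c : ℚ) : chuTerm n b c 0 = 1 := by
  simp [chuTerm, poch_zero]

theorem chuTerm_contiguous (n : ℕ) (b c : ℚ) (k : ℕ) (hc : poch c (k + 1) ≠ 0) :
    (c + n) * chuTerm (n + 1) b c (k + 1) - (c - b + n) * chuTerm n b c (k + 1)
      = (b + (k + 1 : ℕ)) * chuTerm n b c (k + 1) - (b + k) * chuTerm n b c k := by
  rw [poch_succ_right, mul_ne_zero_iff] at hc
  obtain ⟨hck, hck'⟩ := hc
  unfold chuTerm
  rw [poch_succ_left (-((n + 1 : ℕ) : ℚ)), show -((n + 1 : ℕ) : ℚ) + 1 = -n by push_cast; ring]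
  simp only [poch_succ_right]
  push_cast
  field_simp
  ring

theorem sum_chuTerm_recurrence (n : ℕ) (b c : ℚ) (hc : poch c (n + 1) ≠ 0) :
    (c + n) * ∑ k ∈ range (n + 2), chuTerm (n + 1) b c k
      = (c - b + n) * ∑ k ∈ range (n + 1), chuTerm n b c k := by
  have hvanish : chuTerm n b c (n + 1) = 0 := by simp [chuTerm, poch_neg_natCast_succ]
  have hextend :
      ∑ k ∈ range (n + 1), chuTerm n b c k = ∑ k ∈ range (n + 2), chuTerm n b c k := by
    rw [sum_range_succ _ (n + 1), hvanish, add_zero]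
  rw [← sub_eq_zero]
  calc (c + n) * ∑ k ∈ range (n + 2), chuTerm (n + 1) b c k
        - (c - b + n) * ∑ k ∈ range (n + 1), chuTerm n b c k
      = ∑ k ∈ range (n + 2),
          ((c + n) * chuTerm (n + 1) b c k - (c - b + n) * chuTerm n b c k) := by
        rw [hextend, mul_sum, mul_sum, sum_sub_distrib]
    _ = b + ∑ k ∈ range (n + 1),
          ((b + (k + 1 : ℕ)) * chuTerm n b c (k + 1) - (b + k) * chuTerm n b c k) := by
        rw [sum_range_succ', sum_congr rfl fun k hk ↦ chuTerm_contiguous n b c k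
          (poch_ne_zero_of_le (by simpa using mem_range.mp hk) hc), chuTerm_zero, chuTerm_zero]
        ring
    _ = 0 := by
        rw [sum_range_sub (fun k : ℕ ↦ (b + k) * chuTerm n b c k), hvanish, chuTerm_zero]
        ring

theorem sum_chuTerm (n : ℕ) (b c : ℚ) (hc : poch c n ≠ 0) :
    ∑ k ∈ range (n + 1), chuTerm n b c k = poch (c - b) n / poch c n := by
  induction n with
  | zero => simp [chuTerm, poch_zero]
  | succ n ih =>
    have hcn : poch c n ≠ 0 := poch_ne_zero_of_le n.le_succ hc
    have hrec := sum_chuTerm_recurrence n b c hc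
    rw [ih hcn] at hrec
    rw [poch_succ_right] at hc
    rw [poch_succ_right, poch_succ_right, eq_div_iff hc]
    field_simp at hrec
    linear_combination hrec

theorem sum_chuTerm_half (m : ℕ) :
    ∑ k ∈ range (m + 2), chuTerm (m + 1) m (1 / 2) k = (-1) ^ m / (2 * m + 1) := by
  have h : poch (1 / 2) m ≠ 0 := (poch_pos (by norm_num) _).ne'
  rw [sum_chuTerm _ _ _ (poch_pos (by norm_num) _).ne',
    show (1 / 2 : ℚ) - m = 1 - (-1 / 2) - ((m + 1 : ℕ) : ℚ) by push_cast; ring,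
    poch_one_sub_sub, poch_succ_left, poch_succ_right, show (-1 / 2 : ℚ) + 1 = 1 / 2 by norm_num]
  field_simp
  ring

theorem chuTerm_half_self (m : ℕ) :
    chuTerm (m + 1) m (1 / 2) (m + 1) = (-1) ^ (m + 1) * (2 * 4 ^ m * m) / (2 * m + 1) := by
  have hP : poch 1 m ≠ 0 := (poch_pos one_pos m).ne'
  have hQ : poch 1 (2 * m) ≠ 0 := (poch_pos one_pos _).ne'
  have hneg : poch (-((m + 1 : ℕ) : ℚ)) (m + 1) = (-1) ^ (m + 1) * poch 1 (m + 1) := by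
    simpa using poch_one_sub_sub 1 (m + 1)
  have hb : poch m (m + 1) = m * poch 1 (2 * m) / poch 1 m := by
    rw [eq_div_iff hP, poch_succ_left, two_mul, poch_add, add_comm (m : ℚ)]
    ring
  have hdup : 4 ^ (m + 1) * poch (1 / 2) (m + 1) * poch 1 (m + 1) = poch 1 (2 * m + 1 + 1) := by
    convert pow_mul_poch_mul_poch_add_half (1 / 2) (m + 1) using 2 <;> norm_num
    ring
  rw [poch_succ_right 1 (2 * m + 1), poch_succ_right 1 (2 * m), poch_succ_right 1 m] at hdup
  push_cast at hdup
  have hhalf : poch (1 / 2) (m + 1)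
      = poch 1 (2 * m) * (2 * m + 1) * (2 * m + 2) / (4 ^ (m + 1) * poch 1 m * (m + 1)) := by
    rw [eq_div_iff (by positivity)]
    linear_combination hdup
  unfold chuTerm
  rw [hneg, hb, hhalf, poch_succ_right 1 m]
  field_simp
  ring

theorem stmt2 (n : ℕ) (hn : 2 ≤ n) :
    ∑ k ∈ Finset.range n,
      poch (-(n : ℚ)) k * poch ((n : ℚ) - 1) k / (poch 1 k * poch (1/2) k)
    = (-1) ^ (n - 1) *
        ((2 : ℚ) ^ (2 * n - 2) - ((2 : ℚ) ^ (2 * n - 2) - 1) / (2 * (n : ℚ) - 1)) := by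
  obtain ⟨m, rfl⟩ : ∃ m, n = m + 1 := ⟨n - 1, by omega⟩
  have hsplit := sum_range_succ (chuTerm (m + 1) m (1 / 2)) (m + 1)
  rw [sum_chuTerm_half, chuTerm_half_self] at hsplit
  change ∑ k ∈ range (m + 1), chuTerm (m + 1) (((m + 1 : ℕ) : ℚ) - 1) (1 / 2) k = _
  rw [Nat.cast_succ, add_sub_cancel_right, eq_sub_of_add_eq hsplit.symm,
    show m + 1 - 1 = m by omega, show 2 * (m + 1) - 2 = 2 * m by omega, pow_mul,
    show (2 : ℚ) ^ 2 = 4 by norm_num, show (2 : ℚ) * (m + 1) - 1 = 2 * m + 1 by ring]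
  have h : (2 : ℚ) * m + 1 ≠ 0 := by positivity
  field_simp
  ring
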